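/- arXiv:2004.02268 — 2 statements merged into one kernel-verified Lean document; each statement's English description precedes it below -/
import Mathlib

section
/- Let Ω = A^ℤ be a sequence space over a finite or countable alphabet A which is not a singleton, with T the left shift and P a T-invariant ψ-mixing (or φ-mixing) probability measure with P([a]) > 0 for each letter a. Then there exists α > 0 such that every cylinder set C defined on an interval of integers [l, r] satisfies P(C) ≤ e^{−α(r−l)}. -/
/-!
Since the alphabet has two letters `a ≠ b` of positive mass and `P` is shift invariant, every
one-coordinate event `{ω i = x}` has probability at most `c := max (1 - P[a]) (1 - P[b]) < 1`.
Pick a gap `k > 0` with `φ k ≤ (1 - c) / 2`. By φ-mixing, extending a cylinder by `k` coordinates and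
constraining only the last one multiplies its measure by at most `P[ω (m + k) = x] + φ k ≤ θ`,
where `θ = (1 + c) / 2 < 1`, so a cylinder of length `n` has measure at most `θ ^ (n / k + 1)`,
which is `≤ exp (log θ / k * n)`.
-/

open MeasureTheory Filter

/-- The left shift on a two-sided sequence space. -/
def shf {𝒜 : Type*} (ω : ℤ → 𝒜) : ℤ → 𝒜 := fun i => ω (i + 1)

/-- The cylinder set fixing coordinates on the interval `[l, r]` to agree with `f`. -/
def cylEvent {𝒜 : Type*} (l r : ℤ) (f : ℤ → 𝒜) : Set (ℤ → 𝒜) :=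
  {ω | ∀ i : ℤ, l ≤ i → i ≤ r → ω i = f i}

/-- The σ-algebra generated by cylinder sets on intervals `[l, m]`, `l ≤ m`
(the "past up to time m"). -/
def pastAlg {𝒜 : Type*} (m : ℤ) : MeasurableSpace (ℤ → 𝒜) :=
  MeasurableSpace.generateFrom {S | ∃ (l : ℤ) (f : ℤ → 𝒜), S = cylEvent l m f}

/-- The σ-algebra generated by cylinder sets on intervals `[m, r]`
(the "future from time m"). -/
def futureAlg {𝒜 : Type*} (m : ℤ) : MeasurableSpace (ℤ → 𝒜) :=
  MeasurableSpace.generateFrom {S | ∃ (r : ℤ) (f : ℤ → 𝒜), S = cylEvent m r f}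

def IsPhiMixing {𝒜 : Type*} [MeasurableSpace 𝒜] (μ : Measure (ℤ → 𝒜)) (φ : ℕ → ℝ) : Prop :=
  ∀ (m : ℤ) (k : ℕ) (A B : Set (ℤ → 𝒜)),
    MeasurableSet[pastAlg m] A → MeasurableSet[futureAlg (m + k)] B → μ A ≠ 0 →
    |μ.real (A ∩ B) / μ.real A - μ.real B| ≤ φ k

theorem le_pow_div_add_one_of_le_mul {g : ℕ → ℝ} {θ : ℝ} {k : ℕ} (hθ : 0 ≤ θ)
    (hbase : ∀ n, g n ≤ θ) (hstep : ∀ n, g (n + k) ≤ θ * g n) (n : ℕ) :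
    g n ≤ θ ^ (n / k + 1) := by
  induction n using Nat.strong_induction_on with
  | _ n ih =>
    rcases Nat.lt_or_ge n k with hnk | hkn
    · simpa [Nat.div_eq_of_lt hnk] using hbase n
    rcases Nat.eq_zero_or_pos k with rfl | hk
    · simpa using hbase n
    obtain ⟨j, rfl⟩ := Nat.exists_eq_add_of_le' hkn
    calc g (j + k) ≤ θ * g j := hstep j
      _ ≤ θ * θ ^ (j / k + 1) := mul_le_mul_of_nonneg_left (ih j (by omega)) hθ
      _ = θ ^ ((j + k) / k + 1) := by rw [Nat.add_div_right j hk, pow_succ' θ (j / k + 1)]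

theorem pow_div_add_one_le_exp {θ : ℝ} (hθ0 : 0 < θ) (hθ1 : θ ≤ 1) {k : ℕ} (hk : 0 < k)
    (n : ℕ) : θ ^ (n / k + 1) ≤ Real.exp (Real.log θ / k * n) := by
  have hn : (n : ℝ) / k ≤ (n / k + 1 : ℕ) := by
    rw [div_le_iff₀ (by exact_mod_cast hk), mul_comm]
    exact_mod_cast (Nat.lt_mul_div_succ n hk).le
  calc θ ^ (n / k + 1) = Real.exp ((n / k + 1 : ℕ) * Real.log θ) := by
        rw [Real.exp_nat_mul, Real.exp_log hθ0]
    _ ≤ Real.exp (n / k * Real.log θ) :=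
        Real.exp_le_exp.2 (mul_le_mul_of_nonpos_right hn (Real.log_nonpos hθ0.le hθ1))
    _ = Real.exp (Real.log θ / k * n) := by ring_nf

section ShiftSpace

variable {𝒜 : Type*}

theorem cylEvent_self (r : ℤ) (f : ℤ → 𝒜) : cylEvent r r f = {ω | ω r = f r} := by
  ext ω
  exact ⟨fun h => h r le_rfl le_rfl, fun h i hri hir => le_antisymm hir hri ▸ h⟩

theorem cylEvent_subset_coord_eq {l r : ℤ} (f : ℤ → 𝒜) (h : l ≤ r) :
    cylEvent l r f ⊆ {ω | ω l = f l} :=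
  fun _ hω => hω l le_rfl h

theorem cylEvent_subset_inter_coord_eq {l m r : ℤ} (f : ℤ → 𝒜) (hlr : l ≤ r) (hmr : m ≤ r) :
    cylEvent l r f ⊆ cylEvent l m f ∩ {ω | ω r = f r} :=
  fun _ hω => ⟨fun i hli him => hω i hli (him.trans hmr), hω r hlr le_rfl⟩

variable [MeasurableSpace 𝒜] {μ : Measure (ℤ → 𝒜)}

theorem measureReal_cylEvent_add_le_mul [IsFiniteMeasure μ] {φ : ℕ → ℝ} (hmix : IsPhiMixing μ φ)
    {l m : ℤ} {k : ℕ} (f : ℤ → 𝒜) (hlm : l ≤ m + k) :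
    μ.real (cylEvent l (m + k) f) ≤
      μ.real (cylEvent l m f) * (μ.real {ω | ω (m + k) = f (m + k)} + φ k) := by
  have hsub := cylEvent_subset_inter_coord_eq f hlm (le_add_of_nonneg_right (Int.natCast_nonneg k))
  by_cases hA : μ (cylEvent l m f) = 0
  · rw [measureReal_def, measureReal_def, hA, measure_mono_null (hsub.trans Set.inter_subset_left) hA]
    simp
  have hpast : MeasurableSet[pastAlg m] (cylEvent l m f) :=
    MeasurableSpace.measurableSet_generateFrom ⟨l, f, rfl⟩
  have hfuture : MeasurableSet[futureAlg (m + k)] {ω : ℤ → 𝒜 | ω (m + k) = f (m + k)} :=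
    MeasurableSpace.measurableSet_generateFrom ⟨m + k, f, (cylEvent_self _ f).symm⟩
  have hp : 0 < μ.real (cylEvent l m f) := ENNReal.toReal_pos hA (measure_ne_top _ _)
  have hcond := (abs_le.1 (hmix m k _ _ hpast hfuture hA)).2
  calc μ.real (cylEvent l (m + k) f)
      ≤ μ.real (cylEvent l m f ∩ {ω | ω (m + k) = f (m + k)}) := measureReal_mono hsub
    _ ≤ _ := by
      rw [mul_comm]
      exact (div_le_iff₀ hp).1 (by linarith)

theorem measureReal_cylEvent_le_pow [IsFiniteMeasure μ] {φ : ℕ → ℝ} (hmix : IsPhiMixing μ φ)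
    {c θ : ℝ} (hc : ∀ (i : ℤ) (x : 𝒜), μ.real {ω | ω i = x} ≤ c) {k : ℕ}
    (hcθ : c ≤ θ) (hφk : c + φ k ≤ θ) (l : ℤ) (f : ℤ → 𝒜) (n : ℕ) :
    μ.real (cylEvent l (l + n) f) ≤ θ ^ (n / k + 1) := by
  have hθ : 0 ≤ θ := measureReal_nonneg.trans ((hc l (f l)).trans hcθ)
  refine le_pow_div_add_one_of_le_mul (g := fun n : ℕ => μ.real (cylEvent l (l + n) f)) hθ
    (fun j => ?_) (fun j => ?_) n
  · calc μ.real (cylEvent l (l + j) f) ≤ μ.real {ω | ω l = f l} :=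
          measureReal_mono (cylEvent_subset_coord_eq f (by omega))
      _ ≤ θ := (hc l (f l)).trans hcθ
  · have hext := measureReal_cylEvent_add_le_mul hmix (l := l) (m := l + j) (k := k) f (by omega)
    have hq := hc (l + j + k) (f (l + j + k))
    rw [Nat.cast_add, ← add_assoc]
    calc μ.real (cylEvent l (l + j + k) f)
        ≤ μ.real (cylEvent l (l + j) f) * (μ.real {ω | ω (l + j + k) = f (l + j + k)} + φ k) :=
          hext
      _ ≤ μ.real (cylEvent l (l + j) f) * θ := by gcongr; linarith
      _ = θ * μ.real (cylEvent l (l + j) f) := mul_comm _ _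

variable [MeasurableSingletonClass 𝒜]

theorem measurableSet_coord_eq (i : ℤ) (x : 𝒜) : MeasurableSet {ω : ℤ → 𝒜 | ω i = x} :=
  (measurableSet_singleton x).preimage (measurable_pi_apply i)

theorem measure_coord_eq_of_measurePreserving (hT : MeasurePreserving shf μ μ) (i : ℤ) (x : 𝒜) :
    μ {ω | ω i = x} = μ {ω | ω 0 = x} := by
  have hstep (j : ℤ) : μ {ω | ω (j + 1) = x} = μ {ω | ω j = x} :=
    hT.measure_preimage (s := {ω | ω j = x}) (measurableSet_coord_eq j x).nullMeasurableSet
  induction i using Int.induction_on with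
  | zero => rfl
  | succ n ih => rw [hstep, ih]
  | pred n ih => rw [← ih, ← hstep]; simp

theorem measureReal_coord_eq_le_one_sub [IsProbabilityMeasure μ] {x y : 𝒜} (hxy : x ≠ y)
    (i : ℤ) : μ.real {ω | ω i = x} ≤ 1 - μ.real {ω | ω i = y} := by
  rw [← probReal_compl_eq_one_sub (measurableSet_coord_eq i y)]
  exact measureReal_mono fun ω hx hy => hxy (hx.symm.trans hy)

theorem exists_measureReal_coord_eq_le_lt_one [IsProbabilityMeasure μ] [Nontrivial 𝒜]
    (hT : MeasurePreserving shf μ μ) (ha : ∀ a : 𝒜, 0 < μ {ω | ω 0 = a}) :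
    ∃ c, 0 ≤ c ∧ c < 1 ∧ ∀ (i : ℤ) (x : 𝒜), μ.real {ω | ω i = x} ≤ c := by
  obtain ⟨a, b, hab⟩ := exists_pair_ne 𝒜
  have hpos (y : 𝒜) : 0 < μ.real {ω | ω 0 = y} :=
    ENNReal.toReal_pos (ha y).ne' (measure_ne_top _ _)
  refine ⟨max (1 - μ.real {ω | ω 0 = a}) (1 - μ.real {ω | ω 0 = b}),
    le_max_of_le_left (by linarith [measureReal_le_one (μ := μ) (s := {ω | ω 0 = a})]),
    max_lt (by linarith [hpos a]) (by linarith [hpos b]), fun i x => ?_⟩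
  have hshift (y : 𝒜) : μ.real {ω | ω i = y} = μ.real {ω | ω 0 = y} := by
    rw [measureReal_def, measure_coord_eq_of_measurePreserving hT]; rfl
  rcases ne_or_eq x a with hxa | rfl
  · exact (hshift a ▸ measureReal_coord_eq_le_one_sub hxa i).trans (le_max_left _ _)
  · exact (hshift b ▸ measureReal_coord_eq_le_one_sub hab i).trans (le_max_right _ _)

end ShiftSpace

theorem stmt12_general {𝒜 : Type*} [MeasurableSpace 𝒜] [MeasurableSingletonClass 𝒜] [Nontrivial 𝒜]
    (μ : Measure (ℤ → 𝒜)) [IsProbabilityMeasure μ]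
    (hT : MeasurePreserving (shf (𝒜 := 𝒜)) μ μ)
    (ha : ∀ a : 𝒜, 0 < μ {ω | ω 0 = a})
    (φ : ℕ → ℝ) (hφ0 : Tendsto φ atTop (nhds 0))
    (hmix : ∀ (m : ℤ) (k : ℕ) (A B : Set (ℤ → 𝒜)),
      MeasurableSet[pastAlg m] A → MeasurableSet[futureAlg (m + k)] B → μ A ≠ 0 →
      |(μ (A ∩ B)).toReal / (μ A).toReal - (μ B).toReal| ≤ φ k) :
    ∃ α : ℝ, 0 < α ∧ ∀ (l r : ℤ) (f : ℤ → 𝒜), l ≤ r →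
      (μ (cylEvent l r f)).toReal ≤ Real.exp (-α * (r - l)) := by
  obtain ⟨c, hc0, hc1, hc⟩ := exists_measureReal_coord_eq_le_lt_one hT ha
  set θ := (1 + c) / 2 with hθ
  have hθ0 : 0 < θ := by positivity
  have hθ1 : θ < 1 := by linarith
  obtain ⟨k, hk, hφk⟩ : ∃ k : ℕ, 0 < k ∧ φ k < (1 - c) / 2 :=
    ((eventually_gt_atTop 0).and (hφ0.eventually_lt_const (by linarith))).exists
  refine ⟨-Real.log θ / k, div_pos (neg_pos.2 (Real.log_neg hθ0 hθ1)) (by exact_mod_cast hk),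
    fun l r f hlr => ?_⟩
  obtain ⟨n, rfl⟩ : ∃ n : ℕ, r = l + n := ⟨(r - l).toNat, by omega⟩
  calc (μ (cylEvent l (l + n) f)).toReal ≤ θ ^ (n / k + 1) :=
        measureReal_cylEvent_le_pow hmix hc (by linarith) (by linarith) l f n
    _ ≤ Real.exp (Real.log θ / k * n) := pow_div_add_one_le_exp hθ0 hθ1.le hk n
    _ = _ := by push_cast; ring_nf

/-- for a shift-invariant φ-mixing probability measure on a sequence
space over a non-singleton countable alphabet with all 1-cylinders of positive
measure, cylinder measures decay exponentially in the length of the base interval. -/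
theorem stmt12 {𝒜 : Type*} [MeasurableSpace 𝒜] [MeasurableSingletonClass 𝒜]
    [Countable 𝒜] [Nontrivial 𝒜]
    (μ : Measure (ℤ → 𝒜)) [IsProbabilityMeasure μ]
    (hT : MeasurePreserving (shf (𝒜 := 𝒜)) μ μ)
    (ha : ∀ a : 𝒜, 0 < μ {ω | ω 0 = a})
    (φ : ℕ → ℝ) (hφ0 : Tendsto φ atTop (nhds 0))
    (hmix : ∀ (m : ℤ) (k : ℕ) (A B : Set (ℤ → 𝒜)),
      MeasurableSet[pastAlg m] A → MeasurableSet[futureAlg (m + k)] B → μ A ≠ 0 →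
      |(μ (A ∩ B)).toReal / (μ A).toReal - (μ B).toReal| ≤ φ k) :
    ∃ α : ℝ, 0 < α ∧ ∀ (l r : ℤ) (f : ℤ → 𝒜), l ≤ r →
      (μ (cylEvent l r f)).toReal ≤ Real.exp (-α * (r - l)) :=
  stmt12_general μ hT ha φ hφ0 hmix
end

section
/- Let (Ω, F, P) be a probability space with σ-algebras F_{m,n} and suppose ψ(G, H)-dependence between F_{−∞,m} and F_{m+k,∞} satisfies ψ(k) < 2^{1/ℓ} − 1 for some k. Then for any events A = ⋂_{i=1}^ℓ A_i and B = ⋂_{i=1}^ℓ B_i whose generating time intervals interleave with all consecutive gaps at least k, |P(A ∩ B) − P(A)P(B)| ≤ 2^{2ℓ+2} ψ(k) (2 − (1 + ψ(k))^ℓ)^{−2} P(A) P(B). -/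
open MeasureTheory Finset

/-!
Among finitely many events living on time intervals separated by gaps `≥ k`, the one that starts
last is `k`-separated from the intersection `D` of the others, which lies in the past σ-algebra;
ψ-mixing gives `P(D ∩ C) = (1 ± ψ) P(D) P(C)`, and induction on the number `n` of events gives
`|P(⋂ C_i) - ∏ P(C_i)| ≤ ((1 + ψ)^n - 1) ∏ P(C_i)`. Applied to `(A_i)`, `(B_i)` and to both
families together, with `x = (1 + ψ)^ℓ < 2` and `Π = ∏ P(A_i) ∏ P(B_i)`, this puts both
`P(A ∩ B)` and `P(A) P(B)` within `(x² - 1) Π` of `Π`, while `P(A) ≥ (2 - x) ∏ P(A_i)` and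
`P(B) ≥ (2 - x) ∏ P(B_i)` give `Π ≤ P(A) P(B) / (2 - x)²`. Finally `2 (x² - 1) ≤ 2^(2ℓ+2) ψ`
by the mean value inequality for `t ↦ t^ℓ`.
-/

theorem Finset.Nonempty.exists_forall_le_of_pairwise {ι α : Type*} [LinearOrder α]
    {s : Finset ι} (hs : s.Nonempty) {u w : ι → α}
    (h : Pairwise fun i j => w i ≤ u j ∨ w j ≤ u i) :
    ∃ j ∈ s, ∀ i ∈ s, i ≠ j → w i ≤ u j := by
  obtain ⟨j₀, hj₀, hmax⟩ := s.exists_max_image u hs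
  by_cases hlast : ∀ i ∈ s, i ≠ j₀ → w i ≤ u j₀
  · exact ⟨j₀, hj₀, hlast⟩
  push Not at hlast
  obtain ⟨j, hj, -, hlt⟩ := hlast
  -- `w j` exceeds every `u i`, so only the alternative `w i ≤ u j` of `h` is left
  refine ⟨j, hj, fun i hi hij => (h hij).resolve_right fun hle => ?_⟩
  exact (hlt.trans_le (hle.trans (hmax i hi))).false

/-- `ψ(k) ≤ ψ` for the σ-algebras `F m n = F_{m,n}`, with the defining ratio
`P(A ∩ B) / (P(A) P(B))` cleared of its denominator. -/
def IsPsiMixing {Ω : Type*} [MeasurableSpace Ω] (μ : Measure Ω) (F : ℤ → ℤ → MeasurableSpace Ω)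
    (k : ℤ) (ψ : ℝ) : Prop :=
  ∀ m A B, MeasurableSet[⨆ l, F l m] A → MeasurableSet[⨆ r, F (m + k) r] B →
    |μ.real (A ∩ B) - μ.real A * μ.real B| ≤ ψ * (μ.real A * μ.real B)

section Filtration

variable {Ω : Type*} {F : ℤ → ℤ → MeasurableSpace Ω}
  (hmono : ∀ m m' n n' : ℤ, m' ≤ m → n ≤ n' → F m n ≤ F m' n')
include hmono

theorem measurableSet_iSup_left_of_le {A : Set Ω} {s t m : ℤ} (hA : MeasurableSet[F s t] A)
    (htm : t ≤ m) : MeasurableSet[⨆ l, F l m] A :=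
  le_iSup (fun l => F l m) s A (hmono s s t m le_rfl htm A hA)

theorem measurableSet_iSup_right_of_le {A : Set Ω} {s t n : ℤ} (hA : MeasurableSet[F s t] A)
    (hns : n ≤ s) : MeasurableSet[⨆ r, F n r] A :=
  le_iSup (fun r => F n r) t A (hmono s n t t hns le_rfl A hA)

end Filtration

theorem abs_measureReal_inter_sub_mul_le {Ω : Type*} [MeasurableSpace Ω] {μ : Measure Ω}
    [IsFiniteMeasure μ] {A B : Set Ω} {ψ : ℝ}
    (h : μ A ≠ 0 → μ B ≠ 0 → |μ.real (A ∩ B) / (μ.real A * μ.real B) - 1| ≤ ψ) :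
    |μ.real (A ∩ B) - μ.real A * μ.real B| ≤ ψ * (μ.real A * μ.real B) := by
  by_cases hA : μ A = 0
  · simp [measureReal_def, hA, measure_mono_null Set.inter_subset_left hA]
  by_cases hB : μ B = 0
  · simp [measureReal_def, hB, measure_mono_null Set.inter_subset_right hB]
  have hpos : 0 < μ.real A * μ.real B := by
    simp only [measureReal_def]
    exact mul_pos (ENNReal.toReal_pos hA (measure_ne_top μ A))
      (ENNReal.toReal_pos hB (measure_ne_top μ B))
  calc |μ.real (A ∩ B) - μ.real A * μ.real B|
      = |(μ.real (A ∩ B) / (μ.real A * μ.real B) - 1) * (μ.real A * μ.real B)| := by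
        rw [sub_mul, div_mul_cancel₀ _ hpos.ne', one_mul]
    _ = |μ.real (A ∩ B) / (μ.real A * μ.real B) - 1| * (μ.real A * μ.real B) := by
        rw [abs_mul, abs_of_pos hpos]
    _ ≤ ψ * (μ.real A * μ.real B) := by gcongr; exact h hA hB

theorem abs_sub_mul_le_of_approx {ψ y r d p P : ℝ} (hψ : 0 ≤ ψ) (hp : 0 ≤ p)
    (hr : |r - d * p| ≤ ψ * (d * p)) (hd : |d - P| ≤ (y - 1) * P) :
    |r - p * P| ≤ ((1 + ψ) * y - 1) * (p * P) := by
  have hdy : d ≤ y * P := by linarith [(abs_le.mp hd).2]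
  calc |r - p * P| = |(r - d * p) + p * (d - P)| := by ring_nf
    _ ≤ |r - d * p| + p * |d - P| := by
        rw [← abs_of_nonneg hp, ← abs_mul, abs_of_nonneg hp]; exact abs_add_le _ _
    _ ≤ ψ * (d * p) + p * ((y - 1) * P) := by gcongr
    _ ≤ ψ * (y * P * p) + p * ((y - 1) * P) := by gcongr
    _ = ((1 + ψ) * y - 1) * (p * P) := by ring

theorem abs_measureReal_biInter_sub_prod_le {Ω ι : Type*} [MeasurableSpace Ω] {μ : Measure Ω}
    [IsProbabilityMeasure μ] {F : ℤ → ℤ → MeasurableSpace Ω}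
    (hmono : ∀ m m' n n' : ℤ, m' ≤ m → n ≤ n' → F m n ≤ F m' n') {k : ℤ} {ψ : ℝ}
    (hmix : IsPsiMixing μ F k ψ) (hψ : 0 ≤ ψ) {C : ι → Set Ω} {u v : ι → ℤ}
    (hC : ∀ i, MeasurableSet[F (u i) (v i)] (C i))
    (hsep : Pairwise fun i j => v i + k ≤ u j ∨ v j + k ≤ u i) (s : Finset ι) :
    |μ.real (⋂ i ∈ s, C i) - ∏ i ∈ s, μ.real (C i)| ≤
      ((1 + ψ) ^ #s - 1) * ∏ i ∈ s, μ.real (C i) := by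
  classical
  induction s using Finset.strongInduction with
  | H s ih =>
  rcases s.eq_empty_or_nonempty with rfl | hs
  · simp
  obtain ⟨j, hj, hlast⟩ := hs.exists_forall_le_of_pairwise (w := fun i => v i + k) hsep
  have hpast : MeasurableSet[⨆ l, F l (u j - k)] (⋂ i ∈ s.erase j, C i) :=
    Finset.measurableSet_biInter _ fun i hi =>
      measurableSet_iSup_left_of_le hmono (hC i)
        (le_sub_iff_add_le.mpr (hlast i (mem_of_mem_erase hi) (ne_of_mem_erase hi)))
  have hfuture : MeasurableSet[⨆ r, F (u j - k + k) r] (C j) :=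
    measurableSet_iSup_right_of_le hmono (hC j) (sub_add_cancel _ _).le
  rw [← insert_erase hj, set_biInter_insert, prod_insert (notMem_erase j s),
    card_insert_of_notMem (notMem_erase j s), pow_succ', Set.inter_comm]
  exact abs_sub_mul_le_of_approx hψ measureReal_nonneg (hmix _ _ _ hpast hfuture)
    (ih _ (erase_ssubset hj))

theorem one_add_pow_lt_two {ψ : ℝ} {ℓ : ℕ} (hψ : 0 ≤ ψ) (h : ψ < 2 ^ ((1 : ℝ) / ℓ) - 1) :
    (1 + ψ) ^ ℓ < 2 := by
  rcases eq_or_ne ℓ 0 with rfl | hℓ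
  · norm_num
  calc (1 + ψ) ^ ℓ < ((2 : ℝ) ^ ((ℓ : ℝ)⁻¹)) ^ ℓ := by
        rw [← one_div]; gcongr; linarith
    _ = 2 := Real.rpow_inv_natCast_pow zero_le_two hℓ

theorem two_mul_sq_sub_one_le {ψ : ℝ} {ℓ : ℕ} (hψ : 0 ≤ ψ) (h2 : (1 + ψ) ^ ℓ < 2) :
    2 * (((1 + ψ) ^ ℓ) ^ 2 - 1) ≤ 2 ^ (2 * ℓ + 2) * ψ := by
  have hx1 : 1 ≤ (1 + ψ) ^ ℓ := one_le_pow₀ (by linarith)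
  have hmvt : (1 + ψ) ^ ℓ - 1 ≤ ψ * ℓ * 2 := by
    have hpred : (1 + ψ) ^ (ℓ - 1) ≤ (1 + ψ) ^ ℓ := pow_le_pow_right₀ (by linarith) (by omega)
    have := abs_pow_sub_pow_le (1 + ψ) 1 ℓ
    rw [one_pow, add_sub_cancel_left, abs_one, abs_of_nonneg hψ,
      abs_of_nonneg (by linarith : 0 ≤ 1 + ψ), max_eq_left (by linarith)] at this
    calc (1 + ψ) ^ ℓ - 1 ≤ ψ * ℓ * (1 + ψ) ^ (ℓ - 1) := (le_abs_self _).trans this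
      _ ≤ ψ * ℓ * 2 := by gcongr; exact hpred.trans h2.le
  have hbernoulli : 1 + ℓ * 3 ≤ (4 : ℝ) ^ ℓ :=
    (one_add_mul_le_pow (by norm_num) ℓ).trans_eq (by norm_num)
  have hpow : (2 : ℝ) ^ (2 * ℓ + 2) = 4 * 4 ^ ℓ := by rw [pow_add, pow_mul]; norm_num; ring
  nlinarith

theorem abs_sub_mul_le_of_approx_mul {x a b c p q : ℝ} (hx1 : 1 ≤ x) (hx2 : x < 2)
    (hp : 0 ≤ p) (hq : 0 ≤ q) (ha : |a - p| ≤ (x - 1) * p) (hb : |b - q| ≤ (x - 1) * q)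
    (hc : |c - p * q| ≤ (x ^ 2 - 1) * (p * q)) :
    |c - a * b| ≤ 2 * (x ^ 2 - 1) * (2 - x)⁻¹ ^ 2 * a * b := by
  obtain ⟨ha₁, ha₂⟩ := abs_le.mp ha
  obtain ⟨hb₁, hb₂⟩ := abs_le.mp hb
  have hδ : 0 < 2 - x := by linarith
  have hpa : (2 - x) * p ≤ a := by linarith
  have hqb : (2 - x) * q ≤ b := by linarith
  have ha0 : 0 ≤ a := (by positivity : 0 ≤ (2 - x) * p).trans hpa
  have hb0 : 0 ≤ b := (by positivity : 0 ≤ (2 - x) * q).trans hqb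
  have hpq : p * q ≤ (2 - x)⁻¹ ^ 2 * a * b := by
    rw [inv_pow, mul_assoc, inv_mul_eq_div, le_div_iff₀ (by positivity)]
    calc p * q * (2 - x) ^ 2 = ((2 - x) * p) * ((2 - x) * q) := by ring
      _ ≤ a * b := mul_le_mul hpa hqb (by positivity) ha0
  -- `(2 - x)² ≥ 2 - x²` turns the lower bounds on `a` and `b` into the lower half of the estimate
  have hab : |a * b - p * q| ≤ (x ^ 2 - 1) * (p * q) := by
    refine abs_le.mpr ⟨?_, ?_⟩
    · nlinarith [mul_le_mul hpa hqb (by positivity) ha0, sq_nonneg (x - 1)]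
    · nlinarith [mul_le_mul (show a ≤ x * p by linarith) (show b ≤ x * q by linarith) hb0
        (by nlinarith)]
  calc |c - a * b| ≤ |c - p * q| + |a * b - p * q| := by
        rw [abs_sub_comm (a * b)]; exact abs_sub_le _ _ _
    _ ≤ 2 * (x ^ 2 - 1) * (p * q) := by linarith
    _ ≤ 2 * (x ^ 2 - 1) * ((2 - x)⁻¹ ^ 2 * a * b) := by gcongr; nlinarith
    _ = 2 * (x ^ 2 - 1) * (2 - x)⁻¹ ^ 2 * a * b := by ring

theorem stmt19_general {Ω : Type*} [m0 : MeasurableSpace Ω] (μ : Measure Ω) [IsProbabilityMeasure μ]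
    (F : ℤ → ℤ → MeasurableSpace Ω)
    (hFmono : ∀ m m' n n' : ℤ, m' ≤ m → n ≤ n' → F m n ≤ F m' n')
    (k : ℤ) (ψk : ℝ) (hψk0 : 0 ≤ ψk)
    (ℓ : ℕ)
    (hψksmall : ψk < (2 : ℝ) ^ ((1 : ℝ) / ℓ) - 1)
    (hmix : ∀ (m : ℤ) (A B : Set Ω),
      MeasurableSet[⨆ l : ℤ, F l m] A → MeasurableSet[⨆ r : ℤ, F (m + k) r] B →
      μ A ≠ 0 → μ B ≠ 0 →
      |(μ (A ∩ B)).toReal / ((μ A).toReal * (μ B).toReal) - 1| ≤ ψk)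
    (A B : Fin ℓ → Set Ω) (s t s' t' : Fin ℓ → ℤ)
    (hA : ∀ i, MeasurableSet[F (s i) (t i)] (A i))
    (hB : ∀ i, MeasurableSet[F (s' i) (t' i)] (B i))
    (hsepAA : ∀ i j : Fin ℓ, i ≠ j → t i + k ≤ s j ∨ t j + k ≤ s i)
    (hsepAB : ∀ i j : Fin ℓ, t i + k ≤ s' j ∨ t' j + k ≤ s i)
    (hsepBB : ∀ i j : Fin ℓ, i ≠ j → t' i + k ≤ s' j ∨ t' j + k ≤ s' i) :
    |(μ ((⋂ i, A i) ∩ ⋂ i, B i)).toReal -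
        (μ (⋂ i, A i)).toReal * (μ (⋂ i, B i)).toReal| ≤
      (2 : ℝ) ^ (2 * ℓ + 2) * ψk * ((2 - (1 + ψk) ^ ℓ)⁻¹) ^ 2 *
        (μ (⋂ i, A i)).toReal * (μ (⋂ i, B i)).toReal := by
  have hψ : IsPsiMixing μ F k ψk := fun m A B hA hB =>
    abs_measureReal_inter_sub_mul_le (hmix m A B hA hB)
  have hsepAB' : Pairwise fun i j : Fin ℓ ⊕ Fin ℓ =>
      Sum.elim t t' i + k ≤ Sum.elim s s' j ∨ Sum.elim t t' j + k ≤ Sum.elim s s' i := by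
    rintro (i | i) (j | j) hij
    exacts [hsepAA i j (ne_of_apply_ne _ hij), hsepAB i j, (hsepAB j i).symm,
      hsepBB i j (ne_of_apply_ne _ hij)]
  have hAprod := abs_measureReal_biInter_sub_prod_le hFmono hψ hψk0 hA hsepAA univ
  have hBprod := abs_measureReal_biInter_sub_prod_le hFmono hψ hψk0 hB hsepBB univ
  have hABprod := abs_measureReal_biInter_sub_prod_le hFmono hψ hψk0
    (C := Sum.elim A B) (by rintro (i | i); exacts [hA i, hB i]) hsepAB' univ
  simp only [mem_univ, Set.iInter_true, card_univ, Fintype.card_fin, Fintype.card_sum,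
    Set.iInter_sum, Sum.elim_inl, Sum.elim_inr, Fintype.prod_sum_type, ← two_mul, pow_mul',
    ← measureReal_def] at hAprod hBprod hABprod ⊢
  have hsmall := one_add_pow_lt_two hψk0 hψksmall
  calc _ ≤ 2 * (((1 + ψk) ^ ℓ) ^ 2 - 1) * (2 - (1 + ψk) ^ ℓ)⁻¹ ^ 2 *
        μ.real (⋂ i, A i) * μ.real (⋂ i, B i) :=
      abs_sub_mul_le_of_approx_mul (one_le_pow₀ (by linarith)) hsmall (prod_nonneg fun _ _ =>
        measureReal_nonneg) (prod_nonneg fun _ _ => measureReal_nonneg) hAprod hBprod hABprod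
    _ ≤ _ := by gcongr ?_ * _ * _ * _; exact two_mul_sq_sub_one_le hψk0 hsmall

/-- if `ψ(k) < 2^{1/ℓ} − 1`, then for `A = ⋂ A_i`, `B = ⋂ B_i` whose
generating time intervals are pairwise separated by gaps of size at least `k`,
`|P(A ∩ B) − P(A)P(B)| ≤ 2^{2ℓ+2} ψ(k) (2 − (1+ψ(k))^ℓ)^{−2} P(A)P(B)`. -/
theorem stmt19 {Ω : Type*} [m0 : MeasurableSpace Ω] (μ : Measure Ω) [IsProbabilityMeasure μ]
    (F : ℤ → ℤ → MeasurableSpace Ω)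
    (hFle : ∀ m n : ℤ, F m n ≤ m0)
    (hFmono : ∀ m m' n n' : ℤ, m' ≤ m → n ≤ n' → F m n ≤ F m' n')
    (k : ℤ) (ψk : ℝ) (hψk0 : 0 ≤ ψk)
    (ℓ : ℕ) (hℓ : 1 ≤ ℓ)
    (hψksmall : ψk < (2 : ℝ) ^ ((1 : ℝ) / ℓ) - 1)
    (hmix : ∀ (m : ℤ) (A B : Set Ω),
      MeasurableSet[⨆ l : ℤ, F l m] A → MeasurableSet[⨆ r : ℤ, F (m + k) r] B →
      μ A ≠ 0 → μ B ≠ 0 →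
      |(μ (A ∩ B)).toReal / ((μ A).toReal * (μ B).toReal) - 1| ≤ ψk)
    (A B : Fin ℓ → Set Ω) (s t s' t' : Fin ℓ → ℤ)
    (hst : ∀ i, s i ≤ t i) (hst' : ∀ i, s' i ≤ t' i)
    (hA : ∀ i, MeasurableSet[F (s i) (t i)] (A i))
    (hB : ∀ i, MeasurableSet[F (s' i) (t' i)] (B i))
    (hsepAA : ∀ i j : Fin ℓ, i ≠ j → t i + k ≤ s j ∨ t j + k ≤ s i)
    (hsepAB : ∀ i j : Fin ℓ, t i + k ≤ s' j ∨ t' j + k ≤ s i)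
    (hsepBB : ∀ i j : Fin ℓ, i ≠ j → t' i + k ≤ s' j ∨ t' j + k ≤ s' i) :
    |(μ ((⋂ i, A i) ∩ ⋂ i, B i)).toReal -
        (μ (⋂ i, A i)).toReal * (μ (⋂ i, B i)).toReal| ≤
      (2 : ℝ) ^ (2 * ℓ + 2) * ψk * ((2 - (1 + ψk) ^ ℓ)⁻¹) ^ 2 *
        (μ (⋂ i, A i)).toReal * (μ (⋂ i, B i)).toReal :=
  stmt19_general (m0 := m0) μ F hFmono k ψk hψk0 ℓ hψksmall hmix A B s t s' t' hA hB hsepAA hsepAB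
    hsepBB
end
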